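/- For every nonzero real number φ, the limit as ε → 0⁺ of ∫₀^∞ e^{(i φ − ε) r} log r dr exists and equals (γ + Log(−i φ))/(i φ), where γ is the Euler–Mascheroni constant and Log is the principal branch of the complex logarithm. -/

import Mathlib

/-!
For `Re z < 0` the integral `∫₀^∞ e^{zr} log r dr` is holomorphic in `z`. At `z = -r` with `r > 0`
it is the derivative at `a = 1` of the Mellin transform `∫₀^∞ t^{a-1} e^{-rt} dt = r^{-a} Γ(a)`,
which is `-(γ + log r)/r` because `Γ'(1) = -γ`; by the identity theorem the integral equals
`(γ + Log(-z))/z` on the whole half-plane. As `φ ≠ 0`, the point `-iφ` lies off the branch cut,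
so this expression is continuous at `z = iφ`, the limit of `z = iφ - ε`.
-/

open MeasureTheory Complex Filter Set Asymptotics Topology

/-- The Laplace transform of `log`, evaluated at `-z`. -/
noncomputable def logLaplace (z : ℂ) : ℂ :=
  ∫ r in Ioi (0 : ℝ), cexp (z * r) * Real.log r

section Mellin

variable {z : ℂ}

lemma norm_cexp_mul_ofReal (z : ℂ) (t : ℝ) : ‖cexp (z * t)‖ = Real.exp (z.re * t) := by
  rw [norm_exp, re_mul_ofReal]

lemma isBigO_cexp_mul_atTop (hz : z.re < 0) (a : ℝ) :
    (fun t : ℝ => cexp (z * t)) =O[atTop] (· ^ (-a)) := by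
  refine isBigO_norm_left.mp ?_
  simpa only [norm_cexp_mul_ofReal, neg_neg] using
    (isLittleO_exp_neg_mul_rpow_atTop (neg_pos.2 hz) (-a)).isBigO

lemma isBigO_cexp_mul_nhdsGT_zero (z : ℂ) :
    (fun t : ℝ => cexp (z * t)) =O[𝓝[>] 0] (· ^ (-(0 : ℝ))) := by
  simp_rw [neg_zero, Real.rpow_zero]
  exact (Continuous.tendsto (by fun_prop) 0).mono_left nhdsWithin_le_nhds |>.isBigO_one ℝ

lemma mellinConvergent_log_smul_cexp_mul_and_hasDerivAt (hz : z.re < 0) {s : ℂ} (hs : 0 < s.re) :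
    MellinConvergent (fun t : ℝ => Real.log t • cexp (z * t)) s ∧
      HasDerivAt (mellin fun t : ℝ => cexp (z * t))
        (mellin (fun t : ℝ => Real.log t • cexp (z * t)) s) s :=
  mellin_hasDerivAt_of_isBigO_rpow
    ((Continuous.continuousOn (by fun_prop)).locallyIntegrableOn measurableSet_Ioi)
    (isBigO_cexp_mul_atTop hz (s.re + 1)) (lt_add_one _) (isBigO_cexp_mul_nhdsGT_zero z) hs

lemma logLaplace_eq_mellin (z : ℂ) :
    logLaplace z = mellin (fun t : ℝ => Real.log t • cexp (z * t)) 1 := by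
  refine setIntegral_congr_fun measurableSet_Ioi fun t _ => ?_
  simp [mul_comm]

lemma integrableOn_cexp_mul_mul_log (hz : z.re < 0) :
    IntegrableOn (fun r : ℝ => cexp (z * r) * Real.log r) (Ioi 0) := by
  refine ((mellinConvergent_log_smul_cexp_mul_and_hasDerivAt hz (s := 1) one_pos).1).congr_fun
    (fun t _ => ?_) measurableSet_Ioi
  simp [mul_comm]

lemma integrableOn_mul_cexp_mul_mul_log (hz : z.re < 0) :
    IntegrableOn (fun r : ℝ => r * cexp (z * r) * Real.log r) (Ioi 0) := by
  refine ((mellinConvergent_log_smul_cexp_mul_and_hasDerivAt hz (s := 2) two_pos).1).congr_fun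
    (fun t _ => ?_) measurableSet_Ioi
  norm_num
  ring

end Mellin

section RealAxis

variable {r : ℝ}

lemma mellin_cexp_neg_mul (hr : 0 < r) {a : ℂ} (ha : 0 < a.re) :
    mellin (fun t : ℝ => cexp (-r * t)) a = (1 / r) ^ a * Gamma a := by
  rw [← integral_cpow_mul_exp_neg_mul_Ioi ha hr]
  exact setIntegral_congr_fun measurableSet_Ioi fun t _ => by simp [neg_mul]

lemma hasDerivAt_one_div_cpow_mul_Gamma (hr : 0 < r) :
    HasDerivAt (fun a : ℂ => (1 / r) ^ a * Gamma a)
      (-(Real.eulerMascheroniConstant + Real.log r) / r) 1 := by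
  have hr' : (r : ℂ) ≠ 0 := ofReal_ne_zero.2 hr.ne'
  have hlog : log (1 / r) = -Real.log r := by
    rw [one_div, ← ofReal_inv, ← ofReal_log (inv_nonneg.2 hr.le), Real.log_inv, ofReal_neg]
  refine (((hasDerivAt_id (1 : ℂ)).const_cpow (Or.inl (one_div_ne_zero hr'))).mul
    hasDerivAt_Gamma_one).congr_deriv ?_
  simp only [id, cpow_one, hlog, Gamma_one]
  field_simp
  ring

lemma logLaplace_neg_ofReal (hr : 0 < r) :
    logLaplace (-r) = -(Real.eulerMascheroniConstant + Real.log r) / r := by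
  have hre : (-(r : ℂ)).re < 0 := by simpa using hr
  have hmellin :
      mellin (fun t : ℝ => cexp (-r * t)) =ᶠ[𝓝 1] fun a => (1 / r) ^ a * Gamma a := by
    filter_upwards [(isOpen_lt continuous_const continuous_re).mem_nhds
      (by simp : (0 : ℝ) < (1 : ℂ).re)] with a ha using mellin_cexp_neg_mul hr ha
  rw [logLaplace_eq_mellin]
  exact ((mellinConvergent_log_smul_cexp_mul_and_hasDerivAt hre one_pos).2.congr_of_eventuallyEq
    hmellin.symm).unique (hasDerivAt_one_div_cpow_mul_Gamma hr)

end RealAxis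

lemma hasDerivAt_cexp_mul_mul_log (z : ℂ) (r : ℝ) :
    HasDerivAt (fun w : ℂ => cexp (w * r) * Real.log r) (r * cexp (z * r) * Real.log r) z :=
  (((hasDerivAt_id z).mul_const (r : ℂ)).cexp.mul_const _).congr_deriv (by simp [mul_comm])

lemma hasDerivAt_logLaplace {z₀ : ℂ} (hz₀ : z₀.re < 0) :
    HasDerivAt logLaplace (∫ r in Ioi (0 : ℝ), r * cexp (z₀ * r) * Real.log r) z₀ := by
  set w : ℂ := ((z₀.re / 2 : ℝ) : ℂ)
  have hw : w.re < 0 := by simp [w]; linarith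
  have hnhds : {z : ℂ | z.re < w.re} ∈ 𝓝 z₀ :=
    (isOpen_lt continuous_re continuous_const).mem_nhds (by simp [w]; linarith)
  refine (hasDerivAt_integral_of_dominated_loc_of_deriv_le
    (F := fun z (r : ℝ) => cexp (z * r) * Real.log r) hnhds (.of_forall fun z => by fun_prop)
    (integrableOn_cexp_mul_mul_log hz₀) (by fun_prop) ?_
    (integrableOn_mul_cexp_mul_mul_log hw).norm
    (.of_forall fun r z _ => hasDerivAt_cexp_mul_mul_log z r)).2
  refine (ae_restrict_iff' measurableSet_Ioi).2 (.of_forall fun r (hr : 0 < r) z hz => ?_)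
  simp only [norm_mul, norm_cexp_mul_ofReal]
  have hexp : Real.exp (z.re * r) ≤ Real.exp (w.re * r) :=
    Real.exp_le_exp.2 (mul_le_mul_of_nonneg_right (le_of_lt hz) hr.le)
  gcongr

lemma differentiableAt_eulerMascheroni_add_log_neg_div {z : ℂ} (hz : -z ∈ slitPlane) :
    DifferentiableAt ℂ (fun z : ℂ => (Real.eulerMascheroniConstant + log (-z)) / z) z :=
  ((differentiableAt_const _).add (differentiableAt_id.neg.clog hz)).div differentiableAt_id
    (by rintro rfl; simp at hz)

lemma tendsto_neg_ofReal_nhdsNE_one :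
    Tendsto (fun r : ℝ => -(r : ℂ)) (𝓝[≠] 1) (𝓝[≠] (-1)) := by
  have h := (Continuous.continuousWithinAt (f := fun r : ℝ => -(r : ℂ)) (s := {1}ᶜ) (x := 1)
    (by fun_prop)).tendsto_nhdsWithin (t := {-1}ᶜ) (fun r hr => by simpa using hr)
  simpa using h

theorem logLaplace_eq {z : ℂ} (hz : z.re < 0) :
    logLaplace z = (Real.eulerMascheroniConstant + log (-z)) / z := by
  set U : Set ℂ := {z | z.re < 0}
  have hU : IsOpen U := isOpen_lt continuous_re continuous_const
  have hslit : ∀ z ∈ U, -z ∈ slitPlane := fun z (hz : z.re < 0) =>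
    mem_slitPlane_iff.2 (.inl (by simpa using hz))
  have hF : AnalyticOnNhd ℂ logLaplace U := DifferentiableOn.analyticOnNhd
    (fun z hz => (hasDerivAt_logLaplace hz).differentiableAt.differentiableWithinAt) hU
  have hg : AnalyticOnNhd ℂ (fun z : ℂ => (Real.eulerMascheroniConstant + log (-z)) / z) U :=
    DifferentiableOn.analyticOnNhd (fun z hz =>
      (differentiableAt_eulerMascheroni_add_log_neg_div (hslit z hz)).differentiableWithinAt) hU
  have hreal : ∃ᶠ w in 𝓝[≠] (-1 : ℂ),
      logLaplace w = (Real.eulerMascheroniConstant + log (-w)) / w := by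
    refine tendsto_neg_ofReal_nhdsNE_one.frequently (Eventually.frequently ?_)
    filter_upwards [eventually_nhdsWithin_of_eventually_nhds (Ioi_mem_nhds one_pos)]
      with r (hr : 0 < r)
    rw [logLaplace_neg_ofReal hr, neg_neg, ← ofReal_log hr.le, div_neg, neg_div]
  exact hF.eqOn_of_preconnected_of_frequently_eq hg (convex_halfSpace_re_lt 0).isPreconnected
    (by simp [U]) hreal hz

/-- For every nonzero real `φ`, the limit as `ε → 0⁺` of
`∫₀^∞ e^{(iφ − ε) r} log r dr` exists and equals `(γ + Log(−iφ))/(iφ)`. -/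
theorem stmt2 (φ : ℝ) (hφ : φ ≠ 0) :
    Filter.Tendsto
      (fun ε : ℝ =>
        ∫ r in Set.Ioi (0 : ℝ), Complex.exp ((Complex.I * φ - ε) * r) * Real.log r)
      (nhdsWithin 0 (Set.Ioi 0))
      (nhds (((Real.eulerMascheroniConstant : ℂ) + Complex.log (-(Complex.I * φ))) /
        (Complex.I * φ))) := by
  have hslit : -(I * φ) ∈ slitPlane := mem_slitPlane_iff.2 (.inr (by simpa using hφ))
  have hpath : Tendsto (fun ε : ℝ => I * φ - ε) (𝓝[>] 0) (𝓝 (I * φ)) := by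
    simpa using ((by fun_prop : Continuous fun ε : ℝ => I * φ - ε).tendsto 0).mono_left
      nhdsWithin_le_nhds
  refine ((differentiableAt_eulerMascheroni_add_log_neg_div hslit).continuousAt.tendsto.comp
    hpath).congr' ?_
  filter_upwards [self_mem_nhdsWithin] with ε (hε : 0 < ε)
  exact (logLaplace_eq (by simpa using hε)).symm
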